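/- arXiv:1512.06367 — 6 statements merged into one kernel-verified Lean document; each statement's English description precedes it below -/
import Mathlib

section
/- Let 1 < p < q be real numbers and t > 1. Then (p^t - 1)/(q^t - 1) ≠ (p - 1)/(q - 1). -/
theorem stmt0 (p q t : ℝ) (hp : 1 < p) (hpq : p < q) (ht : 1 < t) :
    (p ^ t - 1) / (q ^ t - 1) ≠ (p - 1) / (q - 1) := by
  have hq : 1 < q := hp.trans hpq
  have key := (strictConvexOn_rpow ht).secant_strict_mono (a := 1)
    (x := p) (y := q) (by norm_num) (le_of_lt (by linarith : (0:ℝ) < p))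
    (le_of_lt (by linarith : (0:ℝ) < q)) (by linarith) (by linarith) hpq
  rw [Real.one_rpow] at key
  have hpt : 1 < p ^ t := Real.one_lt_rpow_iff_of_pos (by linarith) |>.2 (Or.inl ⟨hp, by linarith⟩)
  have hqt : 1 < q ^ t := Real.one_lt_rpow_iff_of_pos (by linarith) |>.2 (Or.inl ⟨hq, by linarith⟩)
  intro h
  rw [div_eq_div_iff (by linarith) (by linarith)] at h
  rw [div_lt_div_iff₀ (by linarith) (by linarith)] at key
  nlinarith
end

section
/- Let 1 < p < q be real numbers. The function t ↦ (p^t - 1)/(q^t - 1) is strictly decreasing on (0, ∞). -/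
/-- Secant slope from a fixed left endpoint of a strictly concave function is
strictly decreasing. -/
lemma secant_anti {a : ℝ} (ha0 : 0 < a) (ha1 : a < 1) {u v : ℝ}
    (hu : 1 < u) (huv : u < v) :
    (v ^ a - 1) / (v - 1) < (u ^ a - 1) / (u - 1) := by
  have hconc := Real.strictConcaveOn_rpow ha0 ha1
  have h1 : (1 : ℝ) ∈ Set.Ici (0 : ℝ) := by norm_num
  have hv : v ∈ Set.Ici (0 : ℝ) := by
    simp only [Set.mem_Ici]; linarith
  have key := hconc.slope_anti_adjacent h1 hv hu huv
  simp only [Real.one_rpow] at key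
  have hu1 : (0:ℝ) < u - 1 := by linarith
  have hvu : (0:ℝ) < v - u := by linarith
  have hv1 : (0:ℝ) < v - 1 := by linarith
  rw [div_lt_div_iff₀ hvu hu1] at key
  rw [div_lt_div_iff₀ hv1 hu1]
  nlinarith [key]

theorem stmt1 (p q : ℝ) (hp : 1 < p) (hpq : p < q) :
    StrictAntiOn (fun t : ℝ => (p ^ t - 1) / (q ^ t - 1)) (Set.Ioi 0) := by
  have hq : 1 < q := hp.trans hpq
  have hq0 : (0:ℝ) < q := by linarith
  have hp0 : (0:ℝ) < p := by linarith
  set a : ℝ := Real.logb q p with ha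
  have hlq : 0 < Real.log q := Real.log_pos hq
  have ha0 : 0 < a := Real.logb_pos hq hp
  have ha1 : a < 1 := by
    rw [ha, Real.logb, div_lt_one hlq]
    exact Real.log_lt_log hp0 hpq
  have hqa : q ^ a = p := Real.rpow_logb hq0 (ne_of_gt hq) hp0
  intro s hs t ht hst
  simp only [Set.mem_Ioi] at hs ht
  have hqs : 1 < q ^ s := Real.one_lt_rpow_iff_of_pos hq0 |>.2 (Or.inl ⟨hq, hs⟩)
  have hqst : q ^ s < q ^ t := Real.rpow_lt_rpow_left_iff hq |>.2 hst
  have hps : p ^ s = (q ^ s) ^ a := by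
    rw [← hqa, ← Real.rpow_mul hq0.le, ← Real.rpow_mul hq0.le, mul_comm]
  have hpt : p ^ t = (q ^ t) ^ a := by
    rw [← hqa, ← Real.rpow_mul hq0.le, ← Real.rpow_mul hq0.le, mul_comm]
  simp only [hps, hpt]
  exact secant_anti ha0 ha1 hqs hqst
end

section
/- Let 1 < p < q and 0 < t < 1. Then (p^t - 1)/(q^t - 1) > (p - 1)/(q - 1). -/
theorem stmt3 (p q t : ℝ) (hp : 1 < p) (hpq : p < q) (ht0 : 0 < t) (ht1 : t < 1) :
    (p ^ t - 1) / (q ^ t - 1) > (p - 1) / (q - 1) := by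
  have hq : 1 < q := hp.trans hpq
  have hcc := Real.strictConcaveOn_rpow ht0 ht1
  have key := hcc.secant_strict_mono (a := 1) (x := p) (y := q)
    (by norm_num) (Set.mem_Ici.2 (by linarith)) (Set.mem_Ici.2 (by linarith))
    (ne_of_gt hp) (ne_of_gt hq) hpq
  simp only [Real.one_rpow] at key
  have hpt : 1 < p ^ t := Real.one_lt_rpow_iff_of_pos (by linarith) |>.2 (Or.inl ⟨hp, ht0⟩)
  have hqt : 1 < q ^ t := Real.one_lt_rpow_iff_of_pos (by linarith) |>.2 (Or.inl ⟨hq, ht0⟩)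
  rw [div_lt_div_iff₀ (by linarith) (by linarith)] at key
  rw [gt_iff_lt, div_lt_div_iff₀ (by linarith) (by linarith)]
  nlinarith [key]
end

section
/- Let 0 < ω₁ < ω₂ < ω₃ and ζ, ζ' > 0 with ((ω₂/ω₁)^ζ - 1)/((ω₃/ω₁)^ζ - 1) = ((ω₂/ω₁)^{ζ'} - 1)/((ω₃/ω₁)^{ζ'} - 1). Then ζ = ζ'. -/
lemma stmt10_aux (c d ζ ζ' : ℝ) (hc : 1 < c) (hcd : c < d) (hζ : 0 < ζ) (hlt : ζ < ζ')
    (h : (c ^ ζ - 1) / (d ^ ζ - 1) = (c ^ ζ' - 1) / (d ^ ζ' - 1)) : False := by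
  set a := c ^ ζ with ha_def
  set b := d ^ ζ with hb_def
  have hc0 : (0:ℝ) ≤ c := by linarith
  have hd0 : (0:ℝ) ≤ d := by linarith
  have ha : 1 < a := Real.one_lt_rpow_iff_of_pos (by linarith) |>.2 (Or.inl ⟨hc, hζ⟩)
  have hab : a < b := Real.rpow_lt_rpow hc0 hcd hζ
  set s := ζ' / ζ with hs_def
  have hs : 1 < s := (one_lt_div hζ).2 hlt
  have hmul : ζ * s = ζ' := by rw [hs_def]; field_simp
  have hca : c ^ ζ' = a ^ s := by
    rw [ha_def, ← Real.rpow_mul hc0, hmul]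
  have hdb : d ^ ζ' = b ^ s := by
    rw [hb_def, ← Real.rpow_mul hd0, hmul]
  rw [hca, hdb] at h
  have ha0 : (0:ℝ) ≤ a := by linarith
  have hb0 : (0:ℝ) ≤ b := by linarith
  have key := (strictConvexOn_rpow hs).secant_strict_mono (a := 1) (x := a) (y := b)
    (Set.mem_Ici.2 zero_le_one) (Set.mem_Ici.2 ha0) (Set.mem_Ici.2 hb0)
    (by linarith) (by linarith) hab
  simp only [Real.one_rpow] at key
  have has : 1 < a ^ s := Real.one_lt_rpow_iff_of_pos (by linarith) |>.2 (Or.inl ⟨ha, by linarith⟩)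
  have hbs : 1 < b ^ s := Real.one_lt_rpow_iff_of_pos (by linarith) |>.2 (Or.inl ⟨by linarith, by linarith⟩)
  rw [div_lt_div_iff₀ (by linarith) (by linarith)] at key
  rw [div_eq_div_iff (by linarith) (by linarith)] at h
  nlinarith

theorem stmt10 (ω₁ ω₂ ω₃ ζ ζ' : ℝ) (h1 : 0 < ω₁) (h12 : ω₁ < ω₂) (h23 : ω₂ < ω₃)
    (hζ : 0 < ζ) (hζ' : 0 < ζ')
    (h : ((ω₂ / ω₁) ^ ζ - 1) / ((ω₃ / ω₁) ^ ζ - 1)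
        = ((ω₂ / ω₁) ^ ζ' - 1) / ((ω₃ / ω₁) ^ ζ' - 1)) :
    ζ = ζ' := by
  have hc : 1 < ω₂ / ω₁ := (one_lt_div h1).2 h12
  have hcd : ω₂ / ω₁ < ω₃ / ω₁ := by gcongr
  rcases lt_trichotomy ζ ζ' with hlt | heq | hgt
  · exact absurd (stmt10_aux _ _ _ _ hc hcd hζ hlt h) (fun x => x)
  · exact heq
  · exact absurd (stmt10_aux _ _ _ _ hc hcd hζ' hgt h.symm) (fun x => x)
end

section
/- Let 0 < ω₁ < ω₂ < ω₃, f₃, f₃' ∈ ℝ, a, a' ∈ ℝ, ζ, ζ' > 0, and suppose ω·f₃ - 2·ω^{1+ζ}·a = ω·f₃' - 2·ω^{1+ζ'}·a' for all ω ∈ {ω₁, ω₂, ω₃}. If a ≠ 0 and a' ≠ 0, then ζ = ζ', a = a', and f₃ = f₃'. -/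
open Real

/-- Helper: if `2*a*x^ζ - 2*a'*x^ζ'` has equal values at three increasing
positive points, then (given nonvanishing) the exponents agree. -/
lemma aux_zeta_eq (ω₁ ω₂ ω₃ a a' ζ ζ' : ℝ)
    (h1 : 0 < ω₁) (h12 : ω₁ < ω₂) (h23 : ω₂ < ω₃)
    (hζ : 0 < ζ) (hζ' : 0 < ζ') (ha : a ≠ 0)
    (g12 : 2 * a * ω₁ ^ ζ - 2 * a' * ω₁ ^ ζ' = 2 * a * ω₂ ^ ζ - 2 * a' * ω₂ ^ ζ')
    (g23 : 2 * a * ω₂ ^ ζ - 2 * a' * ω₂ ^ ζ' = 2 * a * ω₃ ^ ζ - 2 * a' * ω₃ ^ ζ') :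
    ζ = ζ' := by
  set g : ℝ → ℝ := fun x => 2 * a * x ^ ζ - 2 * a' * x ^ ζ' with hg
  set g' : ℝ → ℝ := fun x => 2 * a * (ζ * x ^ (ζ - 1)) - 2 * a' * (ζ' * x ^ (ζ' - 1)) with hg'
  have hderiv : ∀ x : ℝ, 0 < x → HasDerivAt g (g' x) x := by
    intro x hx
    exact ((Real.hasDerivAt_rpow_const (p := ζ) (Or.inl hx.ne')).const_mul (2 * a)).sub
      ((Real.hasDerivAt_rpow_const (p := ζ') (Or.inl hx.ne')).const_mul (2 * a'))
  -- Rolle on [ω₁, ω₂]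
  have rolle : ∀ u v : ℝ, 0 < u → u < v → g u = g v → ∃ c ∈ Set.Ioo u v, g' c = 0 := by
    intro u v hu huv hguv
    refine exists_hasDerivAt_eq_zero huv ?_ hguv ?_
    · intro x hx
      exact (hderiv x (lt_of_lt_of_le hu hx.1)).continuousAt.continuousWithinAt
    · intro x hx
      exact hderiv x (lt_trans hu hx.1)
  obtain ⟨c₁, hc₁, hz₁⟩ := rolle ω₁ ω₂ h1 h12 g12
  obtain ⟨c₂, hc₂, hz₂⟩ := rolle ω₂ ω₃ (h1.trans h12) h23 g23
  have hc₁pos : 0 < c₁ := h1.trans hc₁.1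
  have hc₂pos : 0 < c₂ := (h1.trans h12).trans hc₂.1
  have hcc : c₁ < c₂ := hc₁.2.trans hc₂.1
  -- from g' c = 0 : a*ζ*c^ζ = a'*ζ'*c^ζ'
  have key : ∀ c : ℝ, 0 < c → g' c = 0 → a * ζ * c ^ ζ = a' * ζ' * c ^ ζ' := by
    intro c hc hzc
    have h0 : 2 * a * (ζ * c ^ (ζ - 1)) = 2 * a' * (ζ' * c ^ (ζ' - 1)) := by
      have := hzc; simp only [hg'] at this; linarith
    have hmul : 2 * a * (ζ * c ^ (ζ - 1)) * c = 2 * a' * (ζ' * c ^ (ζ' - 1)) * c := by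
      rw [h0]
    have e1 : c ^ (ζ - 1) * c = c ^ ζ := by
      rw [Real.rpow_sub hc, Real.rpow_one, div_mul_cancel₀ _ hc.ne']
    have e2 : c ^ (ζ' - 1) * c = c ^ ζ' := by
      rw [Real.rpow_sub hc, Real.rpow_one, div_mul_cancel₀ _ hc.ne']
    linear_combination hmul / 2 - a * ζ * e1 + a' * ζ' * e2
  have k1 := key c₁ hc₁pos hz₁
  have k2 := key c₂ hc₂pos hz₂
  -- cross-multiply: a*ζ*c₁^ζ*c₂^ζ' = a'*ζ'*c₁^ζ'*c₂^ζ' = ... derive c₁^ζ*c₂^ζ' = c₂^ζ*c₁^ζ'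
  have haz : a * ζ ≠ 0 := mul_ne_zero ha hζ.ne'
  have hcross : c₁ ^ ζ * c₂ ^ ζ' = c₂ ^ ζ * c₁ ^ ζ' := by
    have e1 : a * ζ * (c₁ ^ ζ * c₂ ^ ζ') = a' * ζ' * (c₁ ^ ζ' * c₂ ^ ζ') := by
      linear_combination c₂ ^ ζ' * k1
    have e2 : a * ζ * (c₂ ^ ζ * c₁ ^ ζ') = a' * ζ' * (c₂ ^ ζ' * c₁ ^ ζ') := by
      linear_combination c₁ ^ ζ' * k2
    have : a * ζ * (c₁ ^ ζ * c₂ ^ ζ') = a * ζ * (c₂ ^ ζ * c₁ ^ ζ') := by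
      rw [e1, e2]; ring
    exact mul_left_cancel₀ haz this
  -- ratio r = c₁/c₂ ∈ (0,1), r^ζ = r^ζ'
  set r := c₁ / c₂ with hr
  have hrpos : 0 < r := div_pos hc₁pos hc₂pos
  have hrlt : r < 1 := (div_lt_one hc₂pos).mpr hcc
  have hrr : r ^ ζ = r ^ ζ' := by
    rw [hr, Real.div_rpow hc₁pos.le hc₂pos.le, Real.div_rpow hc₁pos.le hc₂pos.le]
    rw [div_eq_div_iff (Real.rpow_pos_of_pos hc₂pos ζ).ne' (Real.rpow_pos_of_pos hc₂pos ζ').ne']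
    linear_combination hcross
  have hlog : ζ * Real.log r = ζ' * Real.log r := by
    rw [← Real.log_rpow hrpos, ← Real.log_rpow hrpos, hrr]
  have hlogne : Real.log r ≠ 0 := by
    have : Real.log r < 0 := Real.log_neg hrpos hrlt
    exact this.ne
  exact mul_right_cancel₀ hlogne hlog

theorem stmt12 (ω₁ ω₂ ω₃ f₃ f₃' a a' ζ ζ' : ℝ)
    (h1 : 0 < ω₁) (h12 : ω₁ < ω₂) (h23 : ω₂ < ω₃)
    (hζ : 0 < ζ) (hζ' : 0 < ζ') (ha : a ≠ 0) (ha' : a' ≠ 0)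
    (h : ∀ ω ∈ ({ω₁, ω₂, ω₃} : Set ℝ),
      ω * f₃ - 2 * ω ^ (1 + ζ) * a = ω * f₃' - 2 * ω ^ (1 + ζ') * a') :
    ζ = ζ' ∧ a = a' ∧ f₃ = f₃' := by
  have h2 : 0 < ω₂ := h1.trans h12
  have h3 : 0 < ω₃ := h2.trans h23
  -- normalized equations: f₃ - 2*a*ω^ζ = f₃' - 2*a'*ω^ζ'
  have norm : ∀ ω : ℝ, 0 < ω →
      ω * f₃ - 2 * ω ^ (1 + ζ) * a = ω * f₃' - 2 * ω ^ (1 + ζ') * a' →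
      f₃ - 2 * a * ω ^ ζ = f₃' - 2 * a' * ω ^ ζ' := by
    intro ω hω he
    have e1 : ω ^ (1 + ζ) = ω * ω ^ ζ := by
      rw [Real.rpow_add hω, Real.rpow_one]
    have e2 : ω ^ (1 + ζ') = ω * ω ^ ζ' := by
      rw [Real.rpow_add hω, Real.rpow_one]
    rw [e1, e2] at he
    have := mul_left_cancel₀ hω.ne' (show ω * (f₃ - 2 * a * ω ^ ζ) = ω * (f₃' - 2 * a' * ω ^ ζ') by ring_nf; ring_nf at he; linarith)
    exact this
  have n1 := norm ω₁ h1 (h ω₁ (by simp))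
  have n2 := norm ω₂ h2 (h ω₂ (by simp))
  have n3 := norm ω₃ h3 (h ω₃ (by simp))
  have hzeta : ζ = ζ' := by
    apply aux_zeta_eq ω₁ ω₂ ω₃ a a' ζ ζ' h1 h12 h23 hζ hζ' ha <;> linarith
  subst hzeta
  have hne : ω₁ ^ ζ ≠ ω₂ ^ ζ := by
    have := Real.rpow_lt_rpow h1.le h12 hζ
    exact this.ne
  have haa : a = a' := by
    have : 2 * a * ω₁ ^ ζ - 2 * a' * ω₁ ^ ζ = 2 * a * ω₂ ^ ζ - 2 * a' * ω₂ ^ ζ := by linarith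
    have h' : (a - a') * (ω₁ ^ ζ - ω₂ ^ ζ) = 0 := by nlinarith
    rcases mul_eq_zero.mp h' with h'' | h''
    · linarith
    · exact absurd (by linarith : ω₁ ^ ζ = ω₂ ^ ζ) hne
  subst haa
  refine ⟨rfl, rfl, by linarith⟩
end

section
/- Let 0 < ω₁ < ω₂ < ω₃. Then the map ζ ↦ ((ω₂/ω₁)^ζ - 1)/((ω₃/ω₁)^ζ - 1) is injective on (0, ∞). -/
open Real

/-- Key inequality: for `0 < s < t`, `s * e^s * (e^t - 1) < t * e^t * (e^s - 1)`. -/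
lemma key_ineq {s t : ℝ} (hs : 0 < s) (hst : s < t) :
    s * Real.exp s * (Real.exp t - 1) < t * Real.exp t * (Real.exp s - 1) := by
  have ht : 0 < t := hs.trans hst
  have h := strictConvexOn_exp.secant_strict_mono_aux3 (x := -t) (y := -s) (z := 0)
    (Set.mem_univ _) (Set.mem_univ _) (by linarith) (by linarith)
  simp only [Real.exp_zero, zero_sub, sub_neg_eq_add, zero_add] at h
  -- h : (1 - exp (-t)) / t < (1 - exp (-s)) / s
  rw [div_lt_div_iff₀ ht hs] at h
  rw [Real.exp_neg, Real.exp_neg] at h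
  have hu : 0 < Real.exp s := Real.exp_pos s
  have hv : 0 < Real.exp t := Real.exp_pos t
  have h2 := mul_lt_mul_of_pos_right h (mul_pos hu hv)
  have e1 : (1 - (Real.exp t)⁻¹) * s * (Real.exp s * Real.exp t)
      = s * Real.exp s * (Real.exp t - 1) := by
    field_simp
  have e2 : (1 - (Real.exp s)⁻¹) * t * (Real.exp s * Real.exp t)
      = t * Real.exp t * (Real.exp s - 1) := by
    field_simp
  rwa [e1, e2] at h2

lemma strictAnti_aux {α β : ℝ} (hα : 0 < α) (hαβ : α < β) :
    StrictAntiOn (fun ζ : ℝ => (Real.exp (α * ζ) - 1) / (Real.exp (β * ζ) - 1)) (Set.Ioi 0) := by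
  have hβ : 0 < β := hα.trans hαβ
  have hden : ∀ x : ℝ, x ∈ Set.Ioi (0:ℝ) → Real.exp (β * x) - 1 ≠ 0 := by
    intro x hx
    have : 1 < Real.exp (β * x) := by
      rw [← Real.exp_zero]
      exact Real.exp_lt_exp.2 (mul_pos hβ hx)
    linarith
  have hderiv : ∀ x : ℝ, x ∈ Set.Ioi (0:ℝ) →
      HasDerivAt (fun ζ : ℝ => (Real.exp (α * ζ) - 1) / (Real.exp (β * ζ) - 1))
        ((α * Real.exp (α * x) * (Real.exp (β * x) - 1)
          - (Real.exp (α * x) - 1) * (β * Real.exp (β * x))) / (Real.exp (β * x) - 1) ^ 2) x := by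
    intro x hx
    have hnum : HasDerivAt (fun ζ : ℝ => Real.exp (α * ζ) - 1) (α * Real.exp (α * x)) x := by
      have h1 : HasDerivAt (fun ζ : ℝ => α * ζ) α x := by
        simpa using (hasDerivAt_id x).const_mul α
      have := (Real.hasDerivAt_exp (α * x)).comp x h1
      simpa [mul_comm] using this.sub_const 1
    have hden' : HasDerivAt (fun ζ : ℝ => Real.exp (β * ζ) - 1) (β * Real.exp (β * x)) x := by
      have h1 : HasDerivAt (fun ζ : ℝ => β * ζ) β x := by
        simpa using (hasDerivAt_id x).const_mul β
      have := (Real.hasDerivAt_exp (β * x)).comp x h1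
      simpa [mul_comm] using this.sub_const 1
    exact hnum.div hden' (hden x hx)
  apply strictAntiOn_of_deriv_neg (convex_Ioi 0)
  · apply ContinuousOn.div
    · fun_prop
    · fun_prop
    · exact hden
  · intro x hx
    rw [interior_Ioi] at hx
    rw [(hderiv x hx).deriv]
    apply div_neg_of_neg_of_pos
    · have hk := key_ineq (s := α * x) (t := β * x) (mul_pos hα hx)
        (by have := hx.out; nlinarith)
      have hx0 : (0:ℝ) < x := hx
      nlinarith [Real.exp_pos (α * x), Real.exp_pos (β * x)]
    · have h1 : Real.exp (β * x) - 1 ≠ 0 := hden x hx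
      positivity

theorem stmt17 (ω₁ ω₂ ω₃ : ℝ) (h1 : 0 < ω₁) (h12 : ω₁ < ω₂) (h23 : ω₂ < ω₃) :
    Set.InjOn (fun ζ : ℝ => ((ω₂ / ω₁) ^ ζ - 1) / ((ω₃ / ω₁) ^ ζ - 1)) (Set.Ioi 0) := by
  have ha : (1:ℝ) < ω₂ / ω₁ := (one_lt_div h1).2 h12
  have hb : (1:ℝ) < ω₃ / ω₁ := (one_lt_div h1).2 (h12.trans h23)
  have hab : ω₂ / ω₁ < ω₃ / ω₁ := by gcongr
  have hα : 0 < Real.log (ω₂ / ω₁) := Real.log_pos ha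
  have hαβ : Real.log (ω₂ / ω₁) < Real.log (ω₃ / ω₁) := Real.log_lt_log (by linarith) hab
  have hfun : (fun ζ : ℝ => ((ω₂ / ω₁) ^ ζ - 1) / ((ω₃ / ω₁) ^ ζ - 1))
      = fun ζ : ℝ => (Real.exp (Real.log (ω₂ / ω₁) * ζ) - 1)
          / (Real.exp (Real.log (ω₃ / ω₁) * ζ) - 1) := by
    funext ζ
    rw [Real.rpow_def_of_pos (by linarith) ζ, Real.rpow_def_of_pos (by linarith) ζ]
  rw [hfun]
  exact (strictAnti_aux hα hαβ).injOn
end
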